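/- Let K be a field, m ≥ 1, and l ≥ 0. Let i = (i_1 ≥ … ≥ i_m) be a weakly decreasing multiindex with entries in {0,…,l}, let d = (m-1, m-2, …, 0), and fix s ∈ {1,…,m-1}. Then in Λ^m(Sym^{l+m-1} E), the sum over all σ ∈ S_m of the wedge F_∧[i·σ + d − e_s] is zero, where F_∧[j] = X^{j_1}Y^{l+m-1-j_1} ∧ ⋯ ∧ X^{j_m}Y^{l+m-1-j_m}, e_s is the s-th standard unit multiindex, and i·σ is the place permutation (i_{1σ^{-1}},…,i_{mσ^{-1}}). (Terms with a negative entry are interpreted as zero.) -/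
import Mathlib


open MvPolynomial

noncomputable section

variable (K : Type*) [Field K]

/-- The basis monomial `X^a Y^{r-a}` of `Sym^r E`, realised as the homogeneous
polynomials of degree `r` in two variables (`0` when `a > r`). -/
def monomH (r a : ℕ) : homogeneousSubmodule (Fin 2) K r :=
  if h : a ≤ r then
    ⟨(X 0 : MvPolynomial (Fin 2) K) ^ a * X 1 ^ (r - a), by
      rw [mem_homogeneousSubmodule]
      have := (isHomogeneous_X_pow (R := K) (0 : Fin 2) a).mul
        (isHomogeneous_X_pow (R := K) (1 : Fin 2) (r - a))
      rwa [Nat.add_sub_cancel' h] at this⟩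
  else 0

/-- The wedge `w 0 ∧ ⋯ ∧ w (m-1)`, as an element of `⋀[K]^m W`. -/
def wedge (W : Type*) [AddCommGroup W] [Module K W] (m : ℕ) (w : Fin m → W) :
    ⋀[K]^m W :=
  ⟨ExteriorAlgebra.ιMulti K m w, ExteriorAlgebra.ιMulti_range K m ⟨w, rfl⟩⟩

/-- for a weakly decreasing multiindex `i` with entries in
`{0,…,l}`, `d = (m-1, m-2, …, 0)` and a position `s` strictly before the last
(`s ∈ {1,…,m-1}` in the 1-indexed numbering of the paper), the sum over all
`σ ∈ S_m` of the wedges `F_∧[i·σ + d − e_s]` vanishes in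
`Λ^m (Sym^{l+m-1} E)`, where `F_∧[j] = X^{j_1}Y^{l+m-1-j_1} ∧ ⋯`, and
`(i·σ)_t = i_{σ⁻¹ t}`.  (No entry is ever negative since `d_s ≥ 1`.) -/
theorem stmt13 (m l : ℕ) (hm : 1 ≤ m)
    (i : Fin m → ℕ) (hdec : ∀ a b : Fin m, a ≤ b → i b ≤ i a) (hil : ∀ t, i t ≤ l)
    (s : Fin m) (hs : (s : ℕ) < m - 1) :
    ∑ σ : Equiv.Perm (Fin m),
      wedge K (homogeneousSubmodule (Fin 2) K (l + m - 1)) m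
        (fun t : Fin m =>
          monomH K (l + m - 1)
            (i (σ⁻¹ t) + (m - 1 - (t : ℕ)) - (if t = s then 1 else 0)))
      = 0 := by
  have hm1 : (s : ℕ) + 1 < m := by omega
  set s' : Fin m := ⟨(s : ℕ) + 1, hm1⟩ with hs'
  have hss' : s ≠ s' := by
    intro h
    have := congrArg Fin.val h
    simp [hs'] at this
  set w : Equiv.Perm (Fin m) → Fin m → homogeneousSubmodule (Fin 2) K (l + m - 1) :=
    fun σ t => monomH K (l + m - 1)
      (i (σ⁻¹ t) + (m - 1 - (t : ℕ)) - (if t = s then 1 else 0)) with hw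
  have key : ∀ σ : Equiv.Perm (Fin m),
      w (Equiv.swap s s' * σ) = w σ ∘ Equiv.swap s s' := by
    intro σ
    funext t
    have hinv : (Equiv.swap s s' * σ)⁻¹ = σ⁻¹ * Equiv.swap s s' := by
      rw [mul_inv_rev, Equiv.swap_inv]
    have hsw1 : Equiv.swap s s' s = s' := Equiv.swap_apply_left _ _
    have hsw2 : Equiv.swap s s' s' = s := Equiv.swap_apply_right _ _
    have hv : (s' : ℕ) = (s : ℕ) + 1 := by rw [hs']
    by_cases hts : t = s
    · rw [hts]
      simp only [hw, Function.comp_apply, hinv, Equiv.Perm.mul_apply, hsw1,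
        if_pos rfl, if_neg (Ne.symm hss')]
      congr 1
      simp only [if_true]
      omega
    · by_cases hts' : t = s'
      · rw [hts']
        simp only [hw, Function.comp_apply, hinv, Equiv.Perm.mul_apply, hsw2,
          if_pos rfl, if_neg (Ne.symm hss')]
        congr 1
        simp only [if_true]
        omega
      · simp only [hw, hinv, Function.comp_apply, Equiv.Perm.mul_apply,
          Equiv.swap_apply_of_ne_of_ne hts hts', if_neg hts]
  apply Finset.sum_ninvolution (fun σ => Equiv.swap s s' * σ)
  · intro σ
    apply Subtype.ext
    show ExteriorAlgebra.ιMulti K m (w σ) + ExteriorAlgebra.ιMulti K m (w (Equiv.swap s s' * σ)) = 0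
    rw [key σ, AlternatingMap.map_swap _ _ hss', add_neg_cancel]
  · intro σ _ h
    apply hss'
    have : Equiv.swap s s' = 1 := mul_right_cancel (b := σ) (by simpa using h)
    have := congrArg (fun e : Equiv.Perm (Fin m) => e s) this
    simpa [Equiv.swap_apply_left] using this.symm
  · intro σ; exact Finset.mem_univ _
  · intro σ
    rw [← mul_assoc, Equiv.swap_mul_self, one_mul]

end
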